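/- For q ∈ ℂ[u, t, t⁻¹], the operator q·∂_u maps A into A if and only if q ∈ u·A := {u·a : a ∈ A}. (Part 1 of the Lemma on derivations of the cone; since q = (q·∂_u)(u), any rational function q for which q·∂_u preserves A automatically lies in A ⊆ ℂ[u, t, t⁻¹], so no generality is lost.) -/

import Mathlib

/-!
`A` is spanned by the monomials `uⁿtᵐ` with `|m| ≤ n`: these exponents form the additive monoid
generated by `(1, 0)` and `(1, ±1)`. The Euler operator `u∂_u` multiplies `uⁿtᵐ` by `n`, so it
preserves `A`, and hence so does `(u·a)∂_u = a·u∂_u` for `a ∈ A`. Conversely, applying `q∂_u` to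
`u²t^{±2} ∈ A` gives `q·ut^{±2} ∈ A`, which forces every monomial `uⁿtᵐ` of `q` to satisfy
`|m| ≤ n - 1`; dividing such a `q` by `u` leaves an element of `A`.
-/

/-- The ring `ℂ[u, t, t⁻¹]` of polynomials in `u` that are Laurent polynomials
in `t`, realized as the monoid algebra of `ℕ × ℤ` over `ℂ`. -/
abbrev PolyLaurent : Type := AddMonoidAlgebra ℂ (ℕ × ℤ)

/-- The monomial `uⁿ tᵐ` in `ℂ[u, t, t⁻¹]`. -/
noncomputable def mono (n : ℕ) (m : ℤ) : PolyLaurent :=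
  AddMonoidAlgebra.single (n, m) 1

/-- The coordinate ring `A` of the double cone `z² = x² + y²`: the subalgebra
of `ℂ[u, t, t⁻¹]` generated by `u`, `u·t` and `u·t⁻¹` (after the complex
rotation `x+iy, x−iy, z ↦ ut, ut⁻¹, u`). -/
noncomputable def coneA : Subalgebra ℂ PolyLaurent :=
  Algebra.adjoin ℂ {mono 1 0, mono 1 1, mono 1 (-1)}

/-- The partial derivative `∂_u` of `ℂ[u, t, t⁻¹]`, sending `uⁿtᵐ` to
`n·u^{n−1}tᵐ`. -/
noncomputable def du : PolyLaurent →ₗ[ℂ] PolyLaurent :=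
  (AddMonoidAlgebra.coeffLinearEquiv ℂ).symm.toLinearMap ∘ₗ
    (Finsupp.lsum ℂ fun (p : ℕ × ℤ) => (p.1 : ℂ) • Finsupp.lsingle (p.1 - 1, p.2)) ∘ₗ
    (AddMonoidAlgebra.coeffLinearEquiv ℂ).toLinearMap

open AddMonoidAlgebra

theorem AddMonoidAlgebra.toSubmodule_adjoin_of'_image {R M : Type*} [CommSemiring R] [AddMonoid M]
    (s : Set M) :
    Subalgebra.toSubmodule (Algebra.adjoin R (of' R M '' s)) =
      supported R R (AddSubmonoid.closure s : Set M) := by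
  have hclosure : (Submonoid.closure (of' R M '' s) : Set R[M]) =
      of' R M '' (AddSubmonoid.closure s : Set M) := by
    have h := congrArg SetLike.coe (MonoidHom.map_mclosure (of R M) (Multiplicative.toAdd ⁻¹' s))
    rw [← AddSubmonoid.toSubmonoid_closure, Submonoid.coe_map] at h
    have himage (t : Set M) : of' R M '' t = of R M '' (Multiplicative.toAdd ⁻¹' t) := by
      ext; simp
    rw [himage, himage]
    exact h.symm
  rw [Algebra.adjoin_eq_span, hclosure, supported_eq_span_single]
  rfl

def coneMonoid : AddSubmonoid (ℕ × ℤ) where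
  carrier := {p | p.2.natAbs ≤ p.1}
  add_mem' := by
    intro a b ha hb
    simp only [Set.mem_ofPred_eq, Prod.fst_add, Prod.snd_add] at *
    omega
  zero_mem' := by simp

theorem closure_cone_generators :
    AddSubmonoid.closure {((1 : ℕ), (0 : ℤ)), (1, 1), (1, -1)} = coneMonoid := by
  apply le_antisymm
  · rw [AddSubmonoid.closure_le]
    rintro p (rfl | rfl | rfl) <;> simp [coneMonoid]
  · rintro ⟨n, m⟩ (hnm : m.natAbs ≤ n)
    have hsplit : ((n, m) : ℕ × ℤ) =
        m.natAbs • ((1 : ℕ), (m.sign : ℤ)) + (n - m.natAbs) • ((1 : ℕ), (0 : ℤ)) := by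
      ext
      · simp only [Prod.fst_add, Prod.smul_fst, smul_eq_mul]; omega
      · simpa [mul_comm] using (Int.sign_mul_abs m).symm
    rw [hsplit]
    refine add_mem (nsmul_mem (AddSubmonoid.subset_closure ?_) _)
      (nsmul_mem (AddSubmonoid.subset_closure (by simp)) _)
    rcases Int.sign_trichotomy m with h | h | h <;> simp [h]

theorem toSubmodule_coneA :
    Subalgebra.toSubmodule coneA = supported ℂ ℂ (coneMonoid : Set (ℕ × ℤ)) := by
  rw [← closure_cone_generators, ← toSubmodule_adjoin_of'_image]
  simp only [Set.image_insert_eq, Set.image_singleton]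
  rfl

theorem mem_coneA_iff {f : PolyLaurent} :
    f ∈ coneA ↔ ∀ p ∈ f.coeff.support, p.2.natAbs ≤ p.1 := by
  rw [← Subalgebra.mem_toSubmodule, toSubmodule_coneA, mem_supported]
  rfl

theorem mono_mem_coneA {n : ℕ} {m : ℤ} (h : m.natAbs ≤ n) : mono n m ∈ coneA := by
  rw [mem_coneA_iff]
  intro p hp
  rw [Finset.mem_singleton.1 (Finsupp.support_single_subset hp)]
  exact h

theorem du_single (p : ℕ × ℤ) (c : ℂ) :
    du (single p c) = (p.1 : ℂ) • single (p.1 - 1, p.2) c := by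
  change (coeffLinearEquiv ℂ).symm (Finsupp.lsum ℂ _ (Finsupp.single p c)) = _
  rw [Finsupp.lsum_single]
  rfl

theorem mono_one_zero_mul_du_single (p : ℕ × ℤ) (c : ℂ) :
    mono 1 0 * du (single p c) = (p.1 : ℂ) • single p c := by
  obtain ⟨n, m⟩ := p
  rcases Nat.eq_zero_or_pos n with rfl | hn
  · simp [du_single]
  · rw [du_single, mul_smul_comm, mono, single_mul_single, one_mul]
    congr 2
    exact Prod.ext (Nat.add_sub_cancel' hn) (zero_add m)

theorem mono_one_zero_mul_du_mem {b : PolyLaurent} (hb : b ∈ coneA) :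
    mono 1 0 * du b ∈ coneA := by
  rw [← Subalgebra.mem_toSubmodule, toSubmodule_coneA, supported_eq_span_single] at hb ⊢
  induction hb using Submodule.span_induction with
  | mem x hx =>
    obtain ⟨p, hp, rfl⟩ := hx
    rw [mono_one_zero_mul_du_single]
    exact Submodule.smul_mem _ _ (Submodule.subset_span ⟨p, hp, rfl⟩)
  | zero => simp
  | add x y _ _ hx hy => simpa only [map_add, mul_add] using add_mem hx hy
  | smul c x _ hx => simpa only [map_smul, mul_smul_comm] using Submodule.smul_mem _ c hx

theorem natAbs_add_le_of_mul_mono_mem {q : PolyLaurent} {n : ℕ} {m : ℤ}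
    (h : q * mono n m ∈ coneA) {p : ℕ × ℤ} (hp : p ∈ q.coeff.support) :
    (p.2 + m).natAbs ≤ p.1 + n := by
  have hshift : p + (n, m) ∈ (q * mono n m).coeff.support := by
    rw [mono, support_coeff_mul_single q 1 (by simp)]
    exact Finset.mem_map_of_mem _ hp
  exact mem_coneA_iff.1 h _ hshift

theorem exists_mem_coneA_eq_mono_one_zero_mul {q : PolyLaurent}
    (hq : ∀ p ∈ q.coeff.support, p.2.natAbs < p.1) : ∃ a ∈ coneA, q = mono 1 0 * a := by
  refine ⟨divOf q (1, 0), ?_, ?_⟩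
  · rw [mem_coneA_iff]
    intro d hd
    have := hq ((1, 0) + d) (by simpa using hd)
    simp only [Prod.snd_add, zero_add, Prod.fst_add] at this
    omega
  · have hmod : modOf q (1, 0) = 0 := by
      ext p
      by_cases hp : ∃ d, p = (1, 0) + d
      · exact coeff_modOf_of_exists_add _ _ _ hp
      · rw [coeff_modOf_of_not_exists_add _ _ _ hp, coeff_zero, Finsupp.coe_zero, Pi.zero_apply,
          ← Finsupp.notMem_support_iff]
        intro hsupp
        have := hq p hsupp
        exact hp ⟨(p.1 - 1, p.2), Prod.ext (by simp only [Prod.fst_add]; omega) (zero_add p.2).symm⟩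
    simpa [hmod, mono] using (divOf_add_modOf q (1, 0)).symm

/-- **Derivations of the cone, part 1.**
For `q ∈ ℂ[u, t, t⁻¹]`, the operator `q·∂_u` maps `A` into `A` if and only if
`q ∈ u·A`. -/
theorem cone_derivations_du (q : PolyLaurent) :
    (∀ a ∈ coneA, q * du a ∈ coneA) ↔ (∃ a ∈ coneA, q = mono 1 0 * a) := by
  constructor
  · intro h
    have hmul (j : ℤ) (hj : j.natAbs ≤ 2) : q * mono 1 j ∈ coneA := by
      have hmem := h _ (mono_mem_coneA hj)
      rwa [mono, du_single, mul_smul_comm, ← Subalgebra.mem_toSubmodule,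
        Submodule.smul_mem_iff _ (by norm_num)] at hmem
    refine exists_mem_coneA_eq_mono_one_zero_mul fun p hp => ?_
    have hplus := natAbs_add_le_of_mul_mono_mem (hmul 2 (by norm_num)) hp
    have hminus := natAbs_add_le_of_mul_mono_mem (hmul (-2) (by norm_num)) hp
    omega
  · rintro ⟨a, ha, rfl⟩ b hb
    rw [mul_right_comm]
    exact mul_mem (mono_one_zero_mul_du_mem hb) ha
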